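/- Fix N ≥ 2. Then ∑_{j = 0}^{N−1} (if N ≤ 2·j and j ∈ P_{2,N} then (1/2)·τ_N(j) else 0) = 1/N, as real numbers. That is, the total weight assigned by the instantiated occupation invariant of the Fast Dice Roller to the terminating states equals 1/N. -/

import Mathlib

open scoped Classical

/-- `F N i`: the least `k` with `2^k ≡ i (mod N)`, or `∞` if no such `k` exists. -/
noncomputable def F (N i : ℕ) : ℕ∞ :=
  sInf {k : ℕ∞ | ∃ m : ℕ, k = (m : ℕ∞) ∧ 2 ^ m ≡ i [MOD N]}

/-- `L N i`: the least `l ≥ 1` with `i·2^l ≡ i (mod N)`, or `∞` if no such `l` exists. -/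
noncomputable def L (N i : ℕ) : ℕ∞ :=
  sInf {k : ℕ∞ | ∃ l : ℕ, k = (l : ℕ∞) ∧ 1 ≤ l ∧ i * 2 ^ l ≡ i [MOD N]}

/-- `P2 N`: the set of residues of powers of two modulo `N`. -/
def P2 (N : ℕ) : Set ℕ := {i : ℕ | ∃ k : ℕ, 2 ^ k ≡ i [MOD N]}

/-- The instantiation `τ_N(i) = (1/2)^{F_N(i)} · (1 − (1/2)^{L_N(i)})⁻¹` (with the second
factor equal to `1` when `L_N(i) = ∞`). -/
noncomputable def tau (N i : ℕ) : ℝ :=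
  if L N i = ⊤ then (1 / 2 : ℝ) ^ (F N i).toNat
  else (1 / 2 : ℝ) ^ (F N i).toNat * (1 - (1 / 2 : ℝ) ^ (L N i).toNat)⁻¹

/-!
The times `k` at which the doubling orbit `1, 2, 4, … (mod N)` visits `j` are exactly
`F_N(j) + t · L_N(j)` (only `F_N(j)` if `j` is not periodic), so `τ_N(j) = ∑ (1/2)^k` over these
visits. Hence `∑_{N ≤ 2j} (1/2) τ_N(j) = ∑_k d_k (1/2)^(k+1)` with `d_k = [N ≤ 2 · (2^k mod N)]`.
But `d_k` is the `(k+1)`-st binary digit of `1/N`, since the remainders `r_k = 2^k mod N` satisfy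
`r_{k+1} + N d_k = 2 r_k`; the series is the binary expansion of `1/N`.
-/

namespace ENat

/-- Both sides are `0` when no `m` satisfies `P`. -/
lemma toNat_sInf_setOf_natCast (P : ℕ → Prop) :
    (sInf {k : ℕ∞ | ∃ m : ℕ, k = m ∧ P m}).toNat = sInf {m | P m} := by
  have hset : {k : ℕ∞ | ∃ m : ℕ, k = m ∧ P m} = (↑) '' {m | P m} := by
    ext k
    exact ⟨fun ⟨m, hk, hm⟩ => ⟨m, hm, hk.symm⟩, fun ⟨m, hm, hk⟩ => ⟨m, hk.symm, hm⟩⟩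
  rcases Set.eq_empty_or_nonempty {m | P m} with h | h
  · simp [hset, h]
  · rw [hset, sInf_image, ← natCast_sInf h, toNat_natCast]

lemma sInf_setOf_natCast_eq_top_iff (P : ℕ → Prop) :
    sInf {k : ℕ∞ | ∃ m : ℕ, k = m ∧ P m} = ⊤ ↔ ∀ m, ¬ P m := by
  refine sInf_eq_top.trans ⟨fun h m hm => ?_, ?_⟩
  · exact natCast_ne_top m (h _ ⟨m, rfl, hm⟩)
  · rintro h _ ⟨m, rfl, hm⟩
    exact absurd hm (h m)

end ENat

namespace Function

variable {α : Type*} {f : α → α} {x y : α}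

lemma iterate_eq_iff_le_and_minimalPeriod_dvd (h : ∃ k, f^[k] x = y) (k : ℕ) :
    f^[k] x = y ↔
      sInf {k | f^[k] x = y} ≤ k ∧ minimalPeriod f y ∣ k - sInf {k | f^[k] x = y} := by
  set k₀ := sInf {k | f^[k] x = y}
  have hk₀ : f^[k₀] x = y := Nat.sInf_mem h
  rw [← isPeriodicPt_iff_minimalPeriod_dvd]
  constructor
  · intro hk
    have hle : k₀ ≤ k := Nat.sInf_le hk
    refine ⟨hle, ?_⟩
    calc f^[k - k₀] y = f^[k - k₀] (f^[k₀] x) := by rw [hk₀]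
      _ = f^[k] x := by rw [← iterate_add_apply, Nat.sub_add_cancel hle]
      _ = y := hk
  · rintro ⟨hle, hper⟩
    rw [← Nat.sub_add_cancel hle, iterate_add_apply, hk₀, hper.eq]

end Function

section Geometric

variable {K : Type*} [NormedDivisionRing K] {r : K}

lemma hasSum_geometric_arithProg (hr : ‖r‖ < 1) (k₀ : ℕ) {p : ℕ} (hp : 0 < p) :
    HasSum (fun k => if k₀ ≤ k ∧ p ∣ k - k₀ then r ^ k else 0) (r ^ k₀ * (1 - r ^ p)⁻¹) := by
  have hinj : Function.Injective (fun t : ℕ => k₀ + p * t) := fun a b hab => by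
    simpa [hp.ne'] using hab
  have hrp : ‖r ^ p‖ < 1 := by rw [norm_pow]; exact pow_lt_one₀ (norm_nonneg _) hr hp.ne'
  rw [← hinj.hasSum_iff]
  · have hprog : (fun k => if k₀ ≤ k ∧ p ∣ k - k₀ then r ^ k else 0) ∘ (fun t => k₀ + p * t) =
        fun t => r ^ k₀ * (r ^ p) ^ t := funext fun t => by simp [pow_add, pow_mul]
    rw [hprog]
    exact (hasSum_geometric_of_norm_lt_one hrp).mul_left (r ^ k₀)
  · rintro k hk
    rw [if_neg]
    rintro ⟨hle, t, ht⟩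
    exact hk ⟨t, by simp only; omega⟩

lemma hasSum_pow_iterate_eq {α : Type*} [DecidableEq α] {f : α → α} {x y : α} (hr : ‖r‖ < 1)
    (h : ∃ k, f^[k] x = y) :
    HasSum (fun k => if f^[k] x = y then r ^ k else 0)
      (if Function.minimalPeriod f y = 0 then r ^ sInf {k | f^[k] x = y}
        else r ^ sInf {k | f^[k] x = y} * (1 - r ^ Function.minimalPeriod f y)⁻¹) := by
  have hhit := Function.iterate_eq_iff_le_and_minimalPeriod_dvd h
  set k₀ := sInf {k | f^[k] x = y}
  set p := Function.minimalPeriod f y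
  split_ifs with hp
  · have hk₀ (k : ℕ) : f^[k] x = y ↔ k = k₀ := by
      rw [hhit, hp, zero_dvd_iff]
      omega
    simp only [hk₀]
    convert hasSum_ite_eq k₀ (r ^ k₀) using 2 with k
    split_ifs with hk <;> simp only [hk]
  · simpa only [hhit] using hasSum_geometric_arithProg hr k₀ (Nat.pos_of_ne_zero hp)

end Geometric

section Doubling

variable {N j : ℕ}

lemma modEq_iff_iterate_mul_two (m : ℕ) :
    2 ^ m ≡ j [MOD N] ↔ (· * 2 : ZMod N → ZMod N)^[m] 1 = j := by
  simp only [mul_right_iterate, one_mul]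
  rw [← ZMod.natCast_eq_natCast_iff]
  push_cast
  rfl

lemma mul_pow_modEq_iff_isPeriodicPt (l : ℕ) :
    j * 2 ^ l ≡ j [MOD N] ↔ Function.IsPeriodicPt (· * 2 : ZMod N → ZMod N) l j := by
  rw [Function.IsPeriodicPt, Function.IsFixedPt, mul_right_iterate,
    ← ZMod.natCast_eq_natCast_iff]
  push_cast
  rfl

/- `F N j` is the first time the doubling orbit of `1` in `ZMod N` reaches `j`, and `L N j` is
the minimal period of `j` under doubling (`0`, like `⊤.toNat`, when `j` is not periodic). -/

lemma toNat_F : (F N j).toNat = sInf {m | (· * 2 : ZMod N → ZMod N)^[m] 1 = j} := by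
  simp_rw [F, ENat.toNat_sInf_setOf_natCast, modEq_iff_iterate_mul_two]

lemma toNat_L : (L N j).toNat = Function.minimalPeriod (· * 2 : ZMod N → ZMod N) j := by
  simp_rw [L, ENat.toNat_sInf_setOf_natCast, mul_pow_modEq_iff_isPeriodicPt,
    Function.minimalPeriod_eq_sInf_n_pos_IsPeriodicPt]
  rfl

lemma L_eq_top_iff : L N j = ⊤ ↔ Function.minimalPeriod (· * 2 : ZMod N → ZMod N) j = 0 := by
  rw [L, ENat.sInf_setOf_natCast_eq_top_iff,
    Function.minimalPeriod_eq_zero_iff_notMem_periodicPts]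
  simp only [Function.periodicPts, Set.mem_ofPred_eq, not_exists, not_and,
    mul_pow_modEq_iff_isPeriodicPt, Nat.one_le_iff_ne_zero, gt_iff_lt, Nat.pos_iff_ne_zero]

lemma hasSum_tau (hj : j < N) (hP : j ∈ P2 N) :
    HasSum (fun k => if 2 ^ k % N = j then (1 / 2 : ℝ) ^ k else 0) (tau N j) := by
  have hvisit (k : ℕ) : 2 ^ k % N = j ↔ (· * 2 : ZMod N → ZMod N)^[k] 1 = j := by
    rw [← modEq_iff_iterate_mul_two, Nat.ModEq, Nat.mod_eq_of_lt hj]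
  simp only [hvisit, tau, L_eq_top_iff, toNat_F, toNat_L]
  refine hasSum_pow_iterate_eq (by norm_num : ‖(1 / 2 : ℝ)‖ < 1) ?_
  obtain ⟨k, hk⟩ := hP
  exact ⟨k, (modEq_iff_iterate_mul_two k).1 hk⟩

lemma hasSum_half_tau (hj : j < N) :
    HasSum (fun k => if 2 ^ k % N = j then (if N ≤ 2 * j then (1 / 2 : ℝ) ^ (k + 1) else 0) else 0)
      (if N ≤ 2 * j ∧ j ∈ P2 N then 1 / 2 * tau N j else 0) := by
  by_cases hP : j ∈ P2 N
  · by_cases hhalf : N ≤ 2 * j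
    · simpa only [hhalf, hP, and_self, if_true, mul_ite, mul_zero, pow_succ']
        using (hasSum_tau hj hP).mul_left (1 / 2)
    · simpa only [hhalf, false_and, if_false, ite_self] using hasSum_zero
  · have hnever (k : ℕ) : 2 ^ k % N ≠ j := fun hk =>
      hP ⟨k, by rw [Nat.ModEq, hk, Nat.mod_eq_of_lt hj]⟩
    simpa only [hnever, hP, and_false, if_false] using hasSum_zero

end Doubling

lemma two_mul_mod_add_of_lt {N r : ℕ} (hr : r < N) :
    2 * r % N + N * (if N ≤ 2 * r then 1 else 0) = 2 * r := by
  split_ifs with h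
  · rw [Nat.mod_eq_sub_mod h, Nat.mod_eq_of_lt (by omega)]
    omega
  · rw [Nat.mod_eq_of_lt (by omega)]
    omega

theorem hasSum_binaryDigits_div {N x : ℕ} (hx : x < N) :
    HasSum (fun k => if N ≤ 2 * (2 ^ k * x % N) then (1 / 2 : ℝ) ^ (k + 1) else 0) (x / N) := by
  -- `u k` is the part of `x / N` not yet accounted for by its first `k` binary digits.
  set u : ℕ → ℝ := fun k => (2 ^ k * x % N : ℕ) / (N * 2 ^ k)
  have hN : (0 : ℝ) < N := by exact_mod_cast (by omega : 0 < N)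
  have hstep (k : ℕ) :
      (if N ≤ 2 * (2 ^ k * x % N) then (1 / 2 : ℝ) ^ (k + 1) else 0) = u k - u (k + 1) := by
    have hrem := two_mul_mod_add_of_lt (Nat.mod_lt (2 ^ k * x) (by omega : 0 < N))
    rw [Nat.mul_mod_mod, ← mul_assoc, ← pow_succ'] at hrem
    have hrem' := congrArg (Nat.cast : ℕ → ℝ) hrem
    push_cast at hrem'
    simp only [u, one_div_pow]
    split_ifs at hrem' ⊢ <;>
    · field_simp
      linear_combination (2 : ℝ) ^ k * hrem'
  have hu0 : u 0 = x / N := by simp [u, Nat.mod_eq_of_lt hx]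
  have hu : Filter.Tendsto u Filter.atTop (nhds 0) := by
    refine squeeze_zero (fun k => by positivity) (fun k => ?_)
      (tendsto_pow_atTop_nhds_zero_of_lt_one (r := (1 / 2 : ℝ)) (by norm_num) (by norm_num))
    have hrN : ((2 ^ k * x % N : ℕ) : ℝ) ≤ N := by exact_mod_cast (Nat.mod_lt _ (by omega)).le
    simp only [u, one_div_pow]
    rw [div_le_div_iff₀ (by positivity) (by positivity), one_mul]
    exact mul_le_mul_of_nonneg_right hrN (by positivity)
  rw [hasSum_iff_tendsto_nat_of_nonneg (fun k => by positivity)]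
  simp only [hstep, Finset.sum_range_sub', ← hu0]
  simpa using hu.const_sub (u 0)

/-- The total weight assigned by the instantiated occupation invariant of the Fast Dice
Roller to the terminating states equals `1/N`. -/
theorem tau_terminating_mass (N : ℕ) (hN : 2 ≤ N) :
    (∑ j ∈ Finset.range N,
        if N ≤ 2 * j ∧ j ∈ P2 N then (1 / 2 : ℝ) * tau N j else 0) = 1 / N := by
  have hvisits := hasSum_sum fun j (hj : j ∈ Finset.range N) =>
    hasSum_half_tau (Finset.mem_range.1 hj)
  simp only [Finset.sum_ite_eq, Finset.mem_range, Nat.mod_lt _ (by omega : 0 < N),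
    if_true] at hvisits
  have hdigits := hasSum_binaryDigits_div (x := 1) (N := N) (by omega)
  simp only [mul_one, Nat.cast_one] at hdigits
  exact hvisits.unique hdigits
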